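/- Let a, d, m, p be integers with m ≥ 1, 0 ≤ p ≤ a ≤ d. For each s = 0,…,m define two vectors in a free module with basis {x_i ⊗ y_j}: w^{ad}_s = Σ_{i=0}^{a-p} (-1)^i √((a-i)!·(d+m-a+p-s+i)!·(a-p+s-i)! / (i!·((a-p-i)!)²)) · x_i ⊗ y_{a-p+s-i} and w^{bc}_s = Σ_{i=0}^{min(a, a-p+s)} (-1)^i √((a-i+s)!²·(d+m-a+p+i-s)! / ((a-p-i+s)!·(a-i)!·i!)) · x_i ⊗ y_{a-p+s-i}. If p ≥ 1, then w^{ad}_1 and w^{bc}_1 are linearly independent; if p = 0, then w^{ad}_s = w^{bc}_s for every s = 0,…,m. -/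
import Mathlib


noncomputable section

/-- The vector `w^{ad}_s = Σ_{i=0}^{a-p} (-1)^i √((a-i)!·(d+m-a+p-s+i)!·(a-p+s-i)! /
(i!·((a-p-i)!)²)) · x_i ⊗ y_{a-p+s-i}`, in the free module on symbols `(i,j) = x_i ⊗ y_j`. -/
def wad (a d m p s : ℕ) : (ℕ × ℕ) →₀ ℝ :=
  ∑ i ∈ Finset.range (a - p + 1),
    ((-1 : ℝ) ^ i *
      Real.sqrt ((Nat.factorial (a - i) * Nat.factorial (d + m + p + i - a - s) *
          Nat.factorial (a + s - p - i) : ℕ) /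
        ((Nat.factorial i * (Nat.factorial (a - p - i)) ^ 2 : ℕ) : ℝ))) •
      Finsupp.single (i, a + s - p - i) (1 : ℝ)

/-- The vector `w^{bc}_s = Σ_{i=0}^{min(a,a-p+s)} (-1)^i √((a-i+s)!²·(d+m-a+p+i-s)! /
((a-p-i+s)!·(a-i)!·i!)) · x_i ⊗ y_{a-p+s-i}`. -/
def wbc (a d m p s : ℕ) : (ℕ × ℕ) →₀ ℝ :=
  ∑ i ∈ Finset.range (min a (a - p + s) + 1),
    ((-1 : ℝ) ^ i *
      Real.sqrt (((Nat.factorial (a + s - i)) ^ 2 * Nat.factorial (d + m + p + i - a - s) : ℕ) /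
        ((Nat.factorial (a + s - p - i) * Nat.factorial (a - i) * Nat.factorial i : ℕ) : ℝ))) •
      Finsupp.single (i, a + s - p - i) (1 : ℝ)

/-- Evaluation of a sum of scaled basis vectors at a point. -/
lemma eval_sum (n : ℕ) (c : ℕ → ℝ) (g : ℕ → ℕ) (k j : ℕ) :
    (∑ i ∈ Finset.range n, c i • Finsupp.single (i, g i) (1:ℝ)) (k, j)
      = ∑ i ∈ Finset.range n, (if i = k ∧ g i = j then c i else 0) := by
  rw [Finsupp.finset_sum_apply]
  refine Finset.sum_congr rfl fun i _ => ?_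
  rw [Finsupp.smul_apply, Finsupp.single_apply]
  simp [Prod.ext_iff, mul_ite]

lemma sum_if_eq (n k : ℕ) (c : ℕ → ℝ) (g : ℕ → ℕ) (hk : k < n) (hg : g k = 0) :
    (∑ i ∈ Finset.range n, if i = k ∧ g i = 0 then c i else 0) = c k := by
  rw [show (∑ i ∈ Finset.range n, if i = k ∧ g i = 0 then c i else 0)
      = ∑ i ∈ Finset.range n, if i = k then c i else 0 from
    Finset.sum_congr rfl fun i _ => by
      congr 1; simp only [eq_iff_iff]
      exact ⟨fun h => h.1, fun h => ⟨h, h ▸ hg⟩⟩]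
  rw [Finset.sum_ite_eq' (Finset.range n) k c, if_pos (Finset.mem_range.2 hk)]

/-- If `p ≥ 1` then `w^{ad}_1` and `w^{bc}_1` are linearly independent; if `p = 0` then
`w^{ad}_s = w^{bc}_s` for every `s = 0,…,m`. -/
theorem stmt_13 (a d m p : ℕ) (hm : 1 ≤ m) (hpa : p ≤ a) (had : a ≤ d) :
    (1 ≤ p → LinearIndependent ℝ ![wad a d m p 1, wbc a d m p 1]) ∧
    (p = 0 → ∀ s ≤ m, wad a d m p s = wbc a d m p s) := by
  constructor
  · -- Linear independence when `1 ≤ p`.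
    intro hp
    rw [LinearIndependent.pair_iff]
    intro c₁ c₂ h
    -- Evaluate at the key `(a - p + 1, 0)`, present only in `wbc`.
    have hwad0 : wad a d m p 1 (a - p + 1, 0) = 0 := by
      rw [wad, eval_sum]
      refine Finset.sum_eq_zero fun i hi => ?_
      rw [if_neg]
      rintro ⟨h1, -⟩
      rw [Finset.mem_range] at hi
      omega
    have hmin : min a (a - p + 1) = a - p + 1 := by omega
    set B : ℝ := (-1:ℝ) ^ (a - p + 1) *
        Real.sqrt (((Nat.factorial (a + 1 - (a - p + 1))) ^ 2 *
            Nat.factorial (d + m + p + (a - p + 1) - a - 1) : ℕ) /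
          ((Nat.factorial (a + 1 - p - (a - p + 1)) * Nat.factorial (a - (a - p + 1)) *
            Nat.factorial (a - p + 1) : ℕ) : ℝ)) with hBdef
    have hwbc0 : wbc a d m p 1 (a - p + 1, 0) = B := by
      rw [wbc, hmin, eval_sum]
      exact sum_if_eq _ _ _ _ (by omega) (by omega)
    have hBpos : 0 < Real.sqrt (((Nat.factorial (a + 1 - (a - p + 1))) ^ 2 *
            Nat.factorial (d + m + p + (a - p + 1) - a - 1) : ℕ) /
          ((Nat.factorial (a + 1 - p - (a - p + 1)) * Nat.factorial (a - (a - p + 1)) *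
            Nat.factorial (a - p + 1) : ℕ) : ℝ)) := by
      apply Real.sqrt_pos.2
      apply div_pos
      · exact_mod_cast Nat.mul_pos (pow_pos (Nat.factorial_pos _) 2) (Nat.factorial_pos _)
      · exact_mod_cast Nat.mul_pos (Nat.mul_pos (Nat.factorial_pos _) (Nat.factorial_pos _))
          (Nat.factorial_pos _)
    have hBne : B ≠ 0 := by
      rw [hBdef]
      exact mul_ne_zero (pow_ne_zero _ (by norm_num)) (ne_of_gt hBpos)
    have h0 := congrArg (fun f : (ℕ × ℕ) →₀ ℝ => f (a - p + 1, 0)) h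
    simp only [Finsupp.add_apply, Finsupp.smul_apply, Finsupp.coe_zero, Pi.zero_apply,
      smul_eq_mul, hwad0, hwbc0, mul_zero, zero_add] at h0
    have hc2 : c₂ = 0 := by
      rcases mul_eq_zero.1 h0 with h' | h'
      · exact h'
      · exact absurd h' hBne
    -- Evaluate at `(0, a + 1 - p)`, where the `wad` coefficient is positive.
    set A : ℝ := (-1:ℝ) ^ 0 *
      Real.sqrt ((Nat.factorial (a - 0) * Nat.factorial (d + m + p + 0 - a - 1) *
          Nat.factorial (a + 1 - p - 0) : ℕ) /
        ((Nat.factorial 0 * (Nat.factorial (a - p - 0)) ^ 2 : ℕ) : ℝ)) with hAdef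
    have hwadA : wad a d m p 1 (0, a + 1 - p) = A := by
      rw [wad, eval_sum]
      rw [show (∑ i ∈ Finset.range (a - p + 1),
          if i = 0 ∧ a + 1 - p - i = a + 1 - p then
            ((-1:ℝ) ^ i * Real.sqrt ((Nat.factorial (a - i) *
                Nat.factorial (d + m + p + i - a - 1) *
                Nat.factorial (a + 1 - p - i) : ℕ) /
              ((Nat.factorial i * (Nat.factorial (a - p - i)) ^ 2 : ℕ) : ℝ))) else 0)
          = ∑ i ∈ Finset.range (a - p + 1),
          if i = 0 then
            ((-1:ℝ) ^ i * Real.sqrt ((Nat.factorial (a - i) *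
                Nat.factorial (d + m + p + i - a - 1) *
                Nat.factorial (a + 1 - p - i) : ℕ) /
              ((Nat.factorial i * (Nat.factorial (a - p - i)) ^ 2 : ℕ) : ℝ))) else 0 from
        Finset.sum_congr rfl fun i _ => by
          congr 1; simp only [eq_iff_iff]
          exact ⟨fun h => h.1, fun h => ⟨h, by omega⟩⟩]
      rw [Finset.sum_ite_eq' (Finset.range (a - p + 1)) 0, if_pos (by simp)]
    have hAne : A ≠ 0 := by
      rw [hAdef]
      refine mul_ne_zero (pow_ne_zero _ (by norm_num)) (ne_of_gt (Real.sqrt_pos.2 ?_))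
      apply div_pos
      · exact_mod_cast Nat.mul_pos (Nat.mul_pos (Nat.factorial_pos _) (Nat.factorial_pos _))
          (Nat.factorial_pos _)
      · exact_mod_cast Nat.mul_pos (Nat.factorial_pos _) (pow_pos (Nat.factorial_pos _) 2)
    have h1 := congrArg (fun f : (ℕ × ℕ) →₀ ℝ => f (0, a + 1 - p)) h
    simp only [Finsupp.add_apply, Finsupp.smul_apply, Finsupp.coe_zero, Pi.zero_apply,
      smul_eq_mul, hwadA, hc2, zero_mul, add_zero] at h1
    exact ⟨by rcases mul_eq_zero.1 h1 with h' | h'; exacts [h', absurd h' hAne], hc2⟩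
  · -- Equality when `p = 0`.
    rintro rfl s hs
    rw [wad, wbc]
    have hmin : min a (a - 0 + s) = a - 0 := by omega
    rw [hmin]
    refine Finset.sum_congr rfl fun i hi => ?_
    rw [Finset.mem_range] at hi
    congr 1
    congr 1
    refine congrArg Real.sqrt ?_
    have hd1 : (0:ℝ) < ((Nat.factorial i * (Nat.factorial (a - 0 - i)) ^ 2 : ℕ) : ℝ) := by
      exact_mod_cast Nat.mul_pos (Nat.factorial_pos _) (pow_pos (Nat.factorial_pos _) 2)
    have hd2 : (0:ℝ) < ((Nat.factorial (a + s - 0 - i) * Nat.factorial (a - i) *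
        Nat.factorial i : ℕ) : ℝ) := by
      exact_mod_cast Nat.mul_pos (Nat.mul_pos (Nat.factorial_pos _) (Nat.factorial_pos _))
        (Nat.factorial_pos _)
    rw [div_eq_div_iff (ne_of_gt hd1) (ne_of_gt hd2)]
    have hai : a - 0 - i = a - i := by omega
    have hasi : a + s - 0 - i = a + s - i := by omega
    rw [hai, hasi]
    push_cast
    ring

  end
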